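/- arXiv:1310.8360 — 2 statements merged into one kernel-verified Lean document; each statement's English description precedes it below -/
import Mathlib

section
/- Let β, γ : ℝ → ℝ be continuous positive functions with β(x) → β_∞ and γ(x) → γ_∞ as |x| → ∞, where β_∞ > γ_∞ > 0. Let d_I > 0 and define R(h) = sup over nonzero ψ ∈ H¹_0(-h, h) of (∫ β ψ²) / (∫ (d_I ψ'² + γ ψ²)). Then liminf_{h→∞} R(h) ≥ β_∞ / γ_∞. -/
/-!
Test the quotient with the rescaled profile `φ (x / h)`, `φ t = 1 - t ^ 2`. The substitution
`x = h t` turns its quotient into `∫ β(h t) φ² / ∫ (d_I φ'² / h² + γ(h t) φ²)` over `[-1, 1]`, which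
tends to `β_∞ / γ_∞` by dominated convergence, since `β(h t) → β_∞` and `γ(h t) → γ_∞` for `t ≠ 0`.
The `liminf` of a real function is a junk value unless the function is eventually bounded above;
this holds because every quotient is at most `sup (β / γ)`.
-/

open Set intervalIntegral Filter Topology MeasureTheory

noncomputable def rayleighQuotient (β γ : ℝ → ℝ) (dI h : ℝ) (ψ : ℝ → ℝ) : ℝ :=
  (∫ x in (-h)..h, β x * (ψ x) ^ 2) / (∫ x in (-h)..h, dI * (deriv ψ x) ^ 2 + γ x * (ψ x) ^ 2)

def dirichletRayleighQuotients (β γ : ℝ → ℝ) (dI h : ℝ) : Set ℝ :=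
  {r | ∃ ψ : ℝ → ℝ, ContDiffOn ℝ 1 ψ (Icc (-h) h) ∧ ψ (-h) = 0 ∧ ψ h = 0 ∧
    (∃ x ∈ Ioo (-h) h, ψ x ≠ 0) ∧ r = rayleighQuotient β γ dI h ψ}

theorem exists_norm_le_of_tendsto_cocompact {X E : Type*} [TopologicalSpace X]
    [SeminormedAddCommGroup E] {f : X → E} {L : E} (hf : Continuous f)
    (hL : Tendsto f (cocompact X) (𝓝 L)) : ∃ C, ∀ x, ‖f x‖ ≤ C := by
  obtain ⟨C, hC⟩ := isBounded_iff_forall_norm_le.1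
    ((hL.isCompact_insert_range_of_cocompact hf).isBounded.subset (subset_insert _ _))
  exact ⟨C, fun x => hC _ (mem_range_self x)⟩

theorem tendsto_mul_const_cocompact {t : ℝ} (ht : t ≠ 0) :
    Tendsto (fun h : ℝ => h * t) atTop (cocompact ℝ) := by
  rcases ht.lt_or_gt with ht | ht
  · exact (tendsto_id.atTop_mul_const_of_neg ht).mono_right atBot_le_cocompact
  · exact (tendsto_id.atTop_mul_const ht).mono_right atTop_le_cocompact

theorem tendsto_integral_comp_mul_mul {g w : ℝ → ℝ} {a b L : ℝ} (hg : Continuous g)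
    (hgL : Tendsto g (cocompact ℝ) (𝓝 L)) (hw : IntervalIntegrable w volume a b) :
    Tendsto (fun h => ∫ t in a..b, g (h * t) * w t) atTop (𝓝 (L * ∫ t in a..b, w t)) := by
  obtain ⟨C, hC⟩ := exists_norm_le_of_tendsto_cocompact hg hgL
  rw [← intervalIntegral.integral_const_mul]
  refine tendsto_integral_filter_of_dominated_convergence (fun t => C * ‖w t‖) ?_ ?_ ?_ ?_
  · exact Eventually.of_forall fun h =>
      (hg.comp (continuous_const_mul h)).aestronglyMeasurable.mul hw.def'.aestronglyMeasurable
  · refine Eventually.of_forall fun h => Eventually.of_forall fun t _ => ?_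
    rw [norm_mul]
    exact mul_le_mul_of_nonneg_right (hC _) (norm_nonneg _)
  · exact hw.norm.const_mul C
  · filter_upwards [Measure.ae_ne volume 0] with t ht _
    exact ((hgL.comp (tendsto_mul_const_cocompact ht)).mul_const (w t)).congr fun _ => by simp

theorem rayleighQuotient_le {β γ ψ : ℝ → ℝ} {dI h K : ℝ} (hβ : Continuous β)
    (hγ : Continuous γ) (hγ0 : ∀ x, 0 ≤ γ x) (hdI : 0 ≤ dI) (hK : 0 ≤ K)
    (hβK : ∀ x, β x ≤ K * γ x) (hh : -h ≤ h) (hψ : ContinuousOn ψ (Icc (-h) h)) :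
    rayleighQuotient β γ dI h ψ ≤ K := by
  have hint : ∀ f : ℝ → ℝ, Continuous f →
      IntervalIntegrable (fun x => f x * ψ x ^ 2) volume (-h) h := fun f hf =>
    (hf.continuousOn.mul (hψ.pow 2)).intervalIntegrable_of_Icc hh
  by_cases hden : IntervalIntegrable (fun x => dI * deriv ψ x ^ 2 + γ x * ψ x ^ 2) volume (-h) h
  · refine div_le_of_le_mul₀ (integral_nonneg hh fun x _ => by have := hγ0 x; positivity) hK ?_
    calc ∫ x in (-h)..h, β x * ψ x ^ 2
        ≤ ∫ x in (-h)..h, K * (γ x * ψ x ^ 2) :=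
          integral_mono_on hh (hint β hβ) ((hint γ hγ).const_mul K) fun x _ => by
            rw [← mul_assoc]; exact mul_le_mul_of_nonneg_right (hβK x) (sq_nonneg _)
      _ = K * ∫ x in (-h)..h, γ x * ψ x ^ 2 := intervalIntegral.integral_const_mul _ _
      _ ≤ K * ∫ x in (-h)..h, dI * deriv ψ x ^ 2 + γ x * ψ x ^ 2 :=
          mul_le_mul_of_nonneg_left (integral_mono_on hh (hint γ hγ) hden fun x _ =>
            le_add_of_nonneg_left (by positivity)) hK
  · rw [rayleighQuotient, integral_undef hden, div_zero]
    exact hK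

theorem rayleighQuotient_comp_mul {β γ φ : ℝ → ℝ} {dI h : ℝ} (hh : h ≠ 0) :
    rayleighQuotient β γ dI h (fun x => φ (h⁻¹ * x)) =
      (∫ t in (-1)..1, β (h * t) * φ t ^ 2) /
        ∫ t in (-1)..1, dI * (h⁻¹ * deriv φ t) ^ 2 + γ (h * t) * φ t ^ 2 := by
  have hscale (F : ℝ → ℝ) : ∫ x in (-h)..h, F x = h * ∫ t in (-1)..1, F (h * t) := by simp
  rw [rayleighQuotient, hscale, hscale, mul_div_mul_left _ _ hh]
  simp only [deriv_comp_mul_left, smul_eq_mul, inv_mul_cancel_left₀ hh]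

theorem tendsto_rayleighQuotient_comp_mul {β γ φ : ℝ → ℝ} {dI βinf γinf : ℝ}
    (hβ : Continuous β) (hβlim : Tendsto β (cocompact ℝ) (𝓝 βinf))
    (hγ : Continuous γ) (hγlim : Tendsto γ (cocompact ℝ) (𝓝 γinf)) (hγinf : γinf ≠ 0)
    (hφ : ContDiff ℝ 1 φ) (hφ2 : 0 < ∫ t in (-1)..1, φ t ^ 2) :
    Tendsto (fun h => rayleighQuotient β γ dI h (fun x => φ (h⁻¹ * x))) atTop
      (𝓝 (βinf / γinf)) := by
  have hφc := hφ.continuous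
  have hφ2i : IntervalIntegrable (fun t => φ t ^ 2) volume (-1) 1 :=
    (hφc.pow 2).intervalIntegrable _ _
  have hdφ2i : IntervalIntegrable (fun t => deriv φ t ^ 2) volume (-1) 1 :=
    ((hφ.continuous_deriv le_rfl).pow 2).intervalIntegrable _ _
  have hnum := tendsto_integral_comp_mul_mul hβ hβlim hφ2i
  have hden : Tendsto (fun h => ∫ t in (-1)..1, dI * (h⁻¹ * deriv φ t) ^ 2 + γ (h * t) * φ t ^ 2)
      atTop (𝓝 (γinf * ∫ t in (-1)..1, φ t ^ 2)) := by
    have hdecay : Tendsto (fun h : ℝ => dI * h⁻¹ ^ 2 * ∫ t in (-1)..1, deriv φ t ^ 2) atTop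
        (𝓝 0) := by
      simpa using ((tendsto_inv_atTop_zero.pow 2).const_mul dI).mul_const
        (∫ t in (-1)..1, deriv φ t ^ 2)
    refine (zero_add (γinf * _) ▸ hdecay.add (tendsto_integral_comp_mul_mul hγ hγlim hφ2i)).congr
      fun h => ?_
    rw [← intervalIntegral.integral_const_mul, ← integral_add (hdφ2i.const_mul _)
      (Continuous.intervalIntegrable (by fun_prop : Continuous fun t => γ (h * t) * φ t ^ 2) _ _)]
    congr 1 with t
    ring
  have hquot := hnum.div hden (mul_ne_zero hγinf hφ2.ne')
  rw [mul_div_mul_right _ _ hφ2.ne'] at hquot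
  refine hquot.congr' ?_
  filter_upwards [eventually_ne_atTop 0] with h hh
  exact (rayleighQuotient_comp_mul hh).symm

theorem rayleighQuotient_comp_mul_mem {β γ φ : ℝ → ℝ} {dI h : ℝ} (hφ : ContDiff ℝ 1 φ)
    (hφl : φ (-1) = 0) (hφr : φ 1 = 0) (hφ0 : ∃ t ∈ Ioo (-1) 1, φ t ≠ 0) (hh : 0 < h) :
    rayleighQuotient β γ dI h (fun x => φ (h⁻¹ * x)) ∈ dirichletRayleighQuotients β γ dI h := by
  obtain ⟨t, ⟨htl, htr⟩, hφt⟩ := hφ0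
  refine ⟨_, (hφ.comp (contDiff_const.mul contDiff_id)).contDiffOn, by simpa [hh.ne'],
    by simpa [hh.ne'], ⟨h * t, ⟨by nlinarith, by nlinarith⟩, by simpa [hh.ne']⟩, rfl⟩

theorem mem_upperBounds_dirichletRayleighQuotients {β γ : ℝ → ℝ} {dI h K : ℝ}
    (hβ : Continuous β) (hγ : Continuous γ) (hγ0 : ∀ x, 0 ≤ γ x) (hdI : 0 ≤ dI) (hK : 0 ≤ K)
    (hβK : ∀ x, β x ≤ K * γ x) (hh : 0 < h) :
    K ∈ upperBounds (dirichletRayleighQuotients β γ dI h) := by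
  rintro _ ⟨ψ, hψ, -, -, -, rfl⟩
  exact rayleighQuotient_le hβ hγ hγ0 hdI hK hβK (by linarith) hψ.continuousOn

theorem liminf_R0D_large_domain_general (β γ : ℝ → ℝ) (hβc : Continuous β) (hγc : Continuous γ)
    (hγp : ∀ x, 0 < γ x)
    (βinf γinf : ℝ)
    (hβlim : Tendsto β (cocompact ℝ) (𝓝 βinf))
    (hγlim : Tendsto γ (cocompact ℝ) (𝓝 γinf))
    (hγinf : 0 < γinf)
    (dI : ℝ) (hd : 0 < dI)
    (R : ℝ → ℝ)
    (hR : ∀ h : ℝ, 0 < h → R h =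
      sSup {r : ℝ | ∃ ψ : ℝ → ℝ, ContDiffOn ℝ 1 ψ (Icc (-h) h) ∧
        ψ (-h) = 0 ∧ ψ h = 0 ∧ (∃ x ∈ Ioo (-h) h, ψ x ≠ 0) ∧
        r = (∫ x in (-h)..h, β x * (ψ x) ^ 2) /
            (∫ x in (-h)..h, dI * (deriv ψ x) ^ 2 + γ x * (ψ x) ^ 2)}) :
    βinf / γinf ≤ liminf R atTop := by
  obtain ⟨K, hK⟩ := exists_norm_le_of_tendsto_cocompact (hβc.div hγc fun x => (hγp x).ne')
    (hβlim.div hγlim hγinf.ne')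
  have hβK (x : ℝ) : β x ≤ max K 0 * γ x := by
    rw [← div_le_iff₀ (hγp x)]
    exact (Real.le_norm_self _).trans ((hK x).trans (le_max_left _ _))
  have hupper (h : ℝ) (hh : 0 < h) : max K 0 ∈ upperBounds (dirichletRayleighQuotients β γ dI h) :=
    mem_upperBounds_dirichletRayleighQuotients hβc hγc (fun x => (hγp x).le) hd.le
      (le_max_right _ _) hβK hh
  set φ : ℝ → ℝ := fun t => 1 - t ^ 2
  have hφ : ContDiff ℝ 1 φ := by fun_prop
  have hmem (h : ℝ) (hh : 0 < h) :
      rayleighQuotient β γ dI h (fun x => φ (h⁻¹ * x)) ∈ dirichletRayleighQuotients β γ dI h :=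
    rayleighQuotient_comp_mul_mem hφ (by norm_num [φ]) (by norm_num [φ])
      ⟨0, by norm_num, by norm_num [φ]⟩ hh
  have hφ2 : 0 < ∫ t in (-1)..1, φ t ^ 2 :=
    intervalIntegral_pos_of_pos_on ((hφ.continuous.pow 2).intervalIntegrable _ _)
      (fun t ht => pow_pos (by simp only [φ]; nlinarith [ht.1, ht.2]) 2) (by norm_num)
  have hlim := tendsto_rayleighQuotient_comp_mul (dI := dI) hβc hβlim hγc hγlim hγinf.ne' hφ hφ2
  rw [← hlim.liminf_eq]
  refine liminf_le_liminf ?_ hlim.isBoundedUnder_ge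
    (isCoboundedUnder_ge_of_eventually_le atTop (x := max K 0) ?_)
  · filter_upwards [eventually_gt_atTop 0] with h hh
    rw [hR h hh]
    exact le_csSup ⟨_, hupper h hh⟩ (hmem h hh)
  · filter_upwards [eventually_gt_atTop 0] with h hh
    rw [hR h hh]
    exact csSup_le ⟨_, hmem h hh⟩ (hupper h hh)

/-- if β → β_∞, γ → γ_∞ as |x| → ∞ with β_∞ > γ_∞ > 0, then the Dirichlet
basic reproduction number R(h) on (-h,h) satisfies liminf_{h→∞} R(h) ≥ β_∞/γ_∞. -/
theorem liminf_R0D_large_domain (β γ : ℝ → ℝ) (hβc : Continuous β) (hγc : Continuous γ)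
    (hβp : ∀ x, 0 < β x) (hγp : ∀ x, 0 < γ x)
    (βinf γinf : ℝ)
    (hβlim : Tendsto β (cocompact ℝ) (𝓝 βinf))
    (hγlim : Tendsto γ (cocompact ℝ) (𝓝 γinf))
    (hβγ : βinf > γinf) (hγinf : 0 < γinf)
    (dI : ℝ) (hd : 0 < dI)
    (R : ℝ → ℝ)
    (hR : ∀ h : ℝ, 0 < h → R h =
      sSup {r : ℝ | ∃ ψ : ℝ → ℝ, ContDiffOn ℝ 1 ψ (Icc (-h) h) ∧
        ψ (-h) = 0 ∧ ψ h = 0 ∧ (∃ x ∈ Ioo (-h) h, ψ x ≠ 0) ∧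
        r = (∫ x in (-h)..h, β x * (ψ x) ^ 2) /
            (∫ x in (-h)..h, dI * (deriv ψ x) ^ 2 + γ x * (ψ x) ^ 2)}) :
    βinf / γinf ≤ liminf R atTop :=
  liminf_R0D_large_domain_general β γ hβc hγc hγp βinf γinf hβlim hγlim hγinf dI hd R hR
end

section
/- Let β, γ : ℝ → ℝ be continuous with β bounded, γ ≥ γ_min > 0, and suppose β(x) ≤ γ(x) for all x (all sites are low-risk). Then for every bounded open interval Ω and every d_I > 0, the basic reproduction number R_0^D(Ω, d_I) = sup over nonzero φ ∈ H¹_0(Ω) of (∫_Ω β φ²)/(∫_Ω (d_I φ'² + γ φ²)) satisfies R_0^D < 1. -/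
/-!
Since `φ a = 0`, the fundamental theorem of calculus and Cauchy–Schwarz give the Poincaré bound
`φ x ^ 2 ≤ (b - a) * A` with `A = ∫ φ' ^ 2`. Writing `N = ∫ β φ ^ 2` and `P = ∫ γ φ ^ 2`, this
gives `N ≤ M * A` with `M = B⁺ (b - a) ^ 2`, and low risk gives `N ≤ P`. Together they bound the
quotient `N / (d * A + P)` by `M / (d + M) < 1`, uniformly in `φ`.
-/

open Set intervalIntegral MeasureTheory

section

variable {φ : ℝ → ℝ} {a b : ℝ}

theorem sq_intervalIntegral_le_mul_intervalIntegral_sq {f : ℝ → ℝ} (hab : a ≤ b)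
    (hf : IntervalIntegrable f volume a b)
    (hf2 : IntervalIntegrable (fun x => f x ^ 2) volume a b) :
    (∫ x in a..b, f x) ^ 2 ≤ (b - a) * ∫ x in a..b, f x ^ 2 := by
  rcases hab.eq_or_lt with rfl | hlt
  · simp
  set I := ∫ x in a..b, f x
  set m := I / (b - a)
  have hexpand : ∫ x in a..b, (f x - m) ^ 2 =
      (∫ x in a..b, f x ^ 2) - 2 * m * I + m ^ 2 * (b - a) := by
    have hsq : (fun x => (f x - m) ^ 2) = fun x => (f x ^ 2 - (2 * m) * f x) + m ^ 2 := by
      funext x; ring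
    rw [hsq, integral_add (hf2.sub (hf.const_mul _)) intervalIntegrable_const,
      integral_sub hf2 (hf.const_mul _), intervalIntegral.integral_const_mul,
      intervalIntegral.integral_const, smul_eq_mul]
    ring
  -- `m` is the mean of `f`, and the variance `∫ (f - m) ^ 2` is nonnegative.
  have hvar : 0 ≤ ∫ x in a..b, (f x - m) ^ 2 := integral_nonneg hab fun x _ => sq_nonneg _
  have hL : 0 < b - a := sub_pos.mpr hlt
  have hmI : m * (b - a) = I := div_mul_cancel₀ I hL.ne'
  nlinarith

-- `deriv φ` is a junk value at the endpoints, where `φ` is only differentiable within `Icc a b`.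
theorem intervalIntegral_comp_deriv_eq_derivWithin {E : Type*} [NormedAddCommGroup E]
    [NormedSpace ℝ E] (F : ℝ → ℝ → E) (hab : a ≤ b) :
    ∫ x in a..b, F x (deriv φ x) = ∫ x in a..b, F x (derivWithin φ (Icc a b) x) := by
  simp only [integral_of_le hab, integral_Ioc_eq_integral_Ioo]
  refine setIntegral_congr_fun measurableSet_Ioo fun x hx => ?_
  rw [derivWithin_of_mem_nhds (Icc_mem_nhds hx.1 hx.2)]

theorem ContDiffOn.continuousOn_derivWithin_Icc (hφ : ContDiffOn ℝ 1 φ (Icc a b)) (hab : a < b) :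
    ContinuousOn (derivWithin φ (Icc a b)) (Icc a b) :=
  hφ.continuousOn_derivWithin (uniqueDiffOn_Icc hab) le_rfl

theorem ContDiffOn.intervalIntegral_derivWithin_eq_sub (hφ : ContDiffOn ℝ 1 φ (Icc a b))
    (hab : a < b) {x : ℝ} (hx : x ∈ Icc a b) :
    ∫ t in a..x, derivWithin φ (Icc a b) t = φ x - φ a := by
  have hsub : Icc a x ⊆ Icc a b := Icc_subset_Icc le_rfl hx.2
  refine integral_eq_sub_of_hasDeriv_right_of_le hx.1 (hφ.continuousOn.mono hsub) (fun t ht => ?_)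
    (((hφ.continuousOn_derivWithin_Icc hab).mono hsub).intervalIntegrable_of_Icc hx.1)
  have hnhds : Icc a b ∈ nhds t := Icc_mem_nhds ht.1 (ht.2.trans_le hx.2)
  exact ((hφ.differentiableOn one_ne_zero t (hsub (Ioo_subset_Icc_self ht))).hasDerivWithinAt
    |>.hasDerivAt hnhds).hasDerivWithinAt

theorem ContDiffOn.sq_le_mul_integral_sq_derivWithin (hφ : ContDiffOn ℝ 1 φ (Icc a b))
    (hab : a < b) (hφa : φ a = 0) {x : ℝ} (hx : x ∈ Icc a b) :
    φ x ^ 2 ≤ (b - a) * ∫ t in a..b, derivWithin φ (Icc a b) t ^ 2 := by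
  set ψ := derivWithin φ (Icc a b)
  have hψ : ContinuousOn ψ (Icc a b) := hφ.continuousOn_derivWithin_Icc hab
  have hsub : Icc a x ⊆ Icc a b := Icc_subset_Icc le_rfl hx.2
  have hψ2 : IntervalIntegrable (fun t => ψ t ^ 2) volume a x :=
    ((hψ.pow 2).mono hsub).intervalIntegrable_of_Icc hx.1
  calc φ x ^ 2 = (∫ t in a..x, ψ t) ^ 2 := by
        rw [hφ.intervalIntegral_derivWithin_eq_sub hab hx, hφa, sub_zero]
    _ ≤ (x - a) * ∫ t in a..x, ψ t ^ 2 := sq_intervalIntegral_le_mul_intervalIntegral_sq hx.1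
        ((hψ.mono hsub).intervalIntegrable_of_Icc hx.1) hψ2
    _ ≤ (b - a) * ∫ t in a..b, ψ t ^ 2 := by
        gcongr ?_ * ?_
        · exact integral_nonneg hx.1 fun t _ => sq_nonneg _
        · linarith [hx.2]
        · exact intervalIntegral.integral_mono_interval le_rfl hx.1 hx.2
            (Filter.Eventually.of_forall fun t => sq_nonneg _)
            ((hψ.pow 2).intervalIntegrable_of_Icc hab.le)

theorem div_le_div_add_of_le_of_le_mul {N P A d M : ℝ} (hd : 0 < d) (hA : 0 < A) (hP : 0 ≤ P)
    (hM : 0 ≤ M) (hNP : N ≤ P) (hNA : N ≤ M * A) : N / (d * A + P) ≤ M / (d + M) := by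
  rw [div_le_div_iff₀ (by positivity) (by positivity)]
  nlinarith [mul_le_mul_of_nonneg_left hNP hM, mul_le_mul_of_nonneg_left hNA hd.le]

noncomputable def dirichletRayleighQuotient (β γ : ℝ → ℝ) (d a b : ℝ) (φ : ℝ → ℝ) : ℝ :=
  (∫ x in a..b, β x * φ x ^ 2) / ∫ x in a..b, d * deriv φ x ^ 2 + γ x * φ x ^ 2

theorem dirichletRayleighQuotient_le {β γ : ℝ → ℝ} {B d x₀ : ℝ}
    (hβ : ContinuousOn β (Icc a b)) (hγ : ContinuousOn γ (Icc a b))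
    (hβB : ∀ x ∈ Icc a b, β x ≤ B) (hB : 0 ≤ B) (hγ₀ : ∀ x ∈ Icc a b, 0 ≤ γ x)
    (hβγ : ∀ x ∈ Icc a b, β x ≤ γ x) (hab : a < b) (hd : 0 < d)
    (hφ : ContDiffOn ℝ 1 φ (Icc a b)) (hφa : φ a = 0) (hx₀ : x₀ ∈ Icc a b) (hφx₀ : φ x₀ ≠ 0) :
    dirichletRayleighQuotient β γ d a b φ ≤ B * (b - a) ^ 2 / (d + B * (b - a) ^ 2) := by
  set ψ := derivWithin φ (Icc a b)
  set A := ∫ t in a..b, ψ t ^ 2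
  have hφ₂ : ContinuousOn (fun x => φ x ^ 2) (Icc a b) := hφ.continuousOn.pow 2
  have hβφ : IntervalIntegrable (fun x => β x * φ x ^ 2) volume a b :=
    (hβ.mul hφ₂).intervalIntegrable_of_Icc hab.le
  have hγφ : IntervalIntegrable (fun x => γ x * φ x ^ 2) volume a b :=
    (hγ.mul hφ₂).intervalIntegrable_of_Icc hab.le
  have hpoincare : ∀ x ∈ Icc a b, φ x ^ 2 ≤ (b - a) * A := fun x hx =>
    hφ.sq_le_mul_integral_sq_derivWithin hab hφa hx
  have hA : 0 < A := by
    refine (mul_pos_iff_of_pos_left (sub_pos.mpr hab)).mp ?_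
    exact (by positivity : 0 < φ x₀ ^ 2).trans_le (hpoincare x₀ hx₀)
  have hdψ : IntervalIntegrable (fun x => d * ψ x ^ 2) volume a b :=
    (((hφ.continuousOn_derivWithin_Icc hab).pow 2).const_mul d).intervalIntegrable_of_Icc hab.le
  have hden : ∫ x in a..b, d * deriv φ x ^ 2 + γ x * φ x ^ 2 =
      d * A + ∫ x in a..b, γ x * φ x ^ 2 := by
    rw [intervalIntegral_comp_deriv_eq_derivWithin (fun x y => d * y ^ 2 + γ x * φ x ^ 2) hab.le,
      integral_add hdψ hγφ, intervalIntegral.integral_const_mul]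
  have hNP : ∫ x in a..b, β x * φ x ^ 2 ≤ ∫ x in a..b, γ x * φ x ^ 2 :=
    integral_mono_on hab.le hβφ hγφ fun x hx => by gcongr; exact hβγ x hx
  have hNA : ∫ x in a..b, β x * φ x ^ 2 ≤ B * (b - a) ^ 2 * A :=
    calc ∫ x in a..b, β x * φ x ^ 2 ≤ ∫ _ in a..b, B * ((b - a) * A) :=
          integral_mono_on hab.le hβφ intervalIntegrable_const fun x hx =>
            mul_le_mul (hβB x hx) (hpoincare x hx) (sq_nonneg _) hB
      _ = B * (b - a) ^ 2 * A := by rw [intervalIntegral.integral_const, smul_eq_mul]; ring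
  rw [dirichletRayleighQuotient, hden]
  exact div_le_div_add_of_le_of_le_mul hd hA
    (integral_nonneg hab.le fun x hx => mul_nonneg (hγ₀ x hx) (sq_nonneg _)) (by positivity) hNP hNA

end

/-- if all sites are low-risk (β ≤ γ pointwise), then R_0^D < 1 for every
bounded interval and every diffusion rate d_I > 0. -/
theorem R0D_lt_one_of_low_risk (β γ : ℝ → ℝ) (hβc : Continuous β) (hγc : Continuous γ)
    (B : ℝ) (hβb : ∀ x, β x ≤ B)
    (γmin : ℝ) (hγmin : 0 < γmin) (hγlb : ∀ x, γmin ≤ γ x)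
    (hlow : ∀ x, β x ≤ γ x)
    (g0 h0 dI : ℝ) (hΩ : g0 < h0) (hd : 0 < dI) :
    sSup {r : ℝ | ∃ φ : ℝ → ℝ, ContDiffOn ℝ 1 φ (Icc g0 h0) ∧
        φ g0 = 0 ∧ φ h0 = 0 ∧ (∃ x ∈ Ioo g0 h0, φ x ≠ 0) ∧
        r = (∫ x in g0..h0, β x * (φ x) ^ 2) /
            (∫ x in g0..h0, dI * (deriv φ x) ^ 2 + γ x * (φ x) ^ 2)} < 1 := by
  set M := max B 0 * (h0 - g0) ^ 2
  have hM : 0 ≤ M := by positivity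
  refine lt_of_le_of_lt (b := M / (dI + M)) (Real.sSup_le ?_ (by positivity))
    ((div_lt_one (by positivity)).mpr (by linarith))
  rintro r ⟨φ, hφ, hφg, -, ⟨x₀, hx₀, hφx₀⟩, rfl⟩
  exact dirichletRayleighQuotient_le hβc.continuousOn hγc.continuousOn
    (fun x _ => (hβb x).trans (le_max_left B 0)) (le_max_right B 0)
    (fun x _ => hγmin.le.trans (hγlb x)) (fun x _ => hlow x) hΩ hd hφ hφg
    (Ioo_subset_Icc_self hx₀) hφx₀
end
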